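/- arXiv:1008.0310 — 3 statements merged into one kernel-verified Lean document; each statement's English description precedes it below -/
import Mathlib

section
/- For all integers m ≥ 2 and 1 ≤ i ≤ m−1, the Boros-Moll coefficients are log-concave: d_i(m)² > d_{i-1}(m) · d_{i+1}(m). -/
/-- Boros-Moll coefficient `d_i(m)`, with the convention that it is `0`
for `i < 0` or `i > m` (the sum is empty in the latter case). -/
def bmd (i : ℤ) (m : ℕ) : ℚ :=
  if 0 ≤ i then
    (2 : ℚ) ^ (-(2 * (m : ℤ))) *
      ∑ k ∈ Finset.Icc i.toNat m,
        (2 : ℚ) ^ k * (Nat.choose (2 * m - 2 * k) (m - k)) *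
          (Nat.choose (m + k) k) * (Nat.choose k i.toNat)
  else 0

namespace BM

def Tq (m k i : ℕ) : ℚ :=
  (2 : ℚ) ^ k * (Nat.choose (2 * m - 2 * k) (m - k)) * (Nat.choose (m + k) k) * (Nat.choose k i)

def gq (m k i : ℕ) : ℚ :=
  4 * k * (2 : ℚ) ^ k * (Nat.choose (2 * (m - k) + 1) (m - k + 1)) * (Nat.choose (m + k) k) *
    (Nat.choose k i)

/- ℕ choose lemmas -/
lemma cen (s : ℕ) : (2*s+2).choose (s+1) = 2 * ((2*s+1).choose (s+1)) := by
  have h1 : (2*s+2).choose (s+1) = (2*s+1).choose s + (2*s+1).choose (s+1) :=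
    Nat.choose_succ_succ (2*s+1) s
  have h2 : (2*s+1).choose s = (2*s+1).choose (s+1) := by
    have := Nat.choose_symm (n := 2*s+1) (k := s+1) (by omega)
    rwa [show 2*s+1-(s+1) = s from by omega] at this
  omega

lemma cen2 (s : ℕ) : ((2*s+3).choose (s+2)) * (s+2) = 2*(2*s+3) * ((2*s+1).choose (s+1)) := by
  have h := Nat.add_one_mul_choose_eq (2*s+2) (s+1)
  rw [show 2*s+2+1 = 2*s+3 from by omega, show s+1+1 = s+2 from by omega] at h
  rw [← h, cen s]; ring

lemma cen3 (s : ℕ) : (2*s+4).choose (s+2) = 2 * ((2*s+3).choose (s+2)) := by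
  have h1 : (2*s+4).choose (s+2) = (2*s+3).choose (s+1) + (2*s+3).choose (s+2) :=
    Nat.choose_succ_succ (2*s+3) (s+1)
  have h2 : (2*s+3).choose (s+1) = (2*s+3).choose (s+2) := by
    have := Nat.choose_symm (n := 2*s+3) (k := s+2) (by omega)
    rwa [show 2*s+3-(s+2) = s+1 from by omega] at this
  omega

lemma hb1 (m k : ℕ) : (m+k+1).choose k * (m+1) = (m+k+1) * ((m+k).choose k) := by
  have h1 : (m+k+1).choose k = (m+k+1).choose (m+1) := by
    have := Nat.choose_symm (n := m+k+1) (k := m+1) (by omega)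
    rwa [show m+k+1-(m+1) = k from by omega] at this
  have h2 := Nat.add_one_mul_choose_eq (m+k) m
  have h3 : (m+k).choose m = (m+k).choose k := by
    have := Nat.choose_symm (n := m+k) (k := k) (by omega)
    rwa [show m+k-k = m from by omega] at this
  rw [h1, ← h2, h3]

lemma hb2 (m k : ℕ) : (m+k+1).choose (k+1) * (k+1) = (m+k+1) * ((m+k).choose k) := by
  have h2 := Nat.add_one_mul_choose_eq (m+k) k
  omega

lemma hz1 (k j : ℕ) (h : j + 1 ≤ k) : (k+1).choose (j+1) * (k-j) = (k+1) * (k.choose (j+1)) := by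
  have h1 := Nat.choose_succ_right_eq (k+1) (j+1)
  have h2 := Nat.add_one_mul_choose_eq k (j+1)
  rw [show k+1-(j+1) = k-j from by omega] at h1
  omega

lemma hz2 (k j : ℕ) (h : j + 1 ≤ k) : k.choose j * (k-j) = (k.choose (j+1)) * (j+1) := by
  have h1 := Nat.choose_succ_right_eq k j
  omega


lemma perA (s k j : ℕ) (hjk : j + 1 ≤ k) :
    ((k:ℚ)+s+2) * Tq (k+s+2) k (j+1) + gq (k+s+1) (k+1) (j+1)
    = 2*(4*((k:ℚ)+s+1)+2*((j:ℚ)+1)+3) * Tq (k+s+1) k (j+1)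
      + 4*(((k:ℚ)+s+1)+((j:ℚ)+1)) * Tq (k+s+1) k j + gq (k+s+1) k (j+1) := by
  have hkj : (0:ℚ) < (k:ℚ)-j := by
    have : (j:ℚ) + 1 ≤ k := by exact_mod_cast hjk
    linarith
  have hs2 : ((s:ℚ)+2) ≠ 0 := by positivity
  simp only [Tq, gq]
  rw [show 2*(k+s+2) - 2*k = 2*s+4 from by omega,
      show (k+s+2) - k = s+2 from by omega,
      show (k+s+2)+k = 2*k+s+2 from by omega,
      show (k+s+1) - (k+1) = s from by omega,
      show (k+s+1)+(k+1) = 2*k+s+2 from by omega,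
      show 2*(k+s+1) - 2*k = 2*s+2 from by omega,
      show (k+s+1) - k = s+1 from by omega,
      show (k+s+1)+k = 2*k+s+1 from by omega,
      show 2*(s+1)+1 = 2*s+3 from by omega,
      show (s+1)+1 = s+2 from rfl]
  have q3 : (((2*s+3).choose (s+2)):ℚ) * ((s:ℚ)+2)
      = 2*(2*(s:ℚ)+3)*(((2*s+1).choose (s+1)):ℚ) := by exact_mod_cast cen2 s
  have q4 : (((2*s+4).choose (s+2)):ℚ) = 2*(((2*s+3).choose (s+2)):ℚ) := by exact_mod_cast cen3 s
  have d3 : ((2*s+3).choose (s+2) : ℚ) = 2*(2*(s:ℚ)+3)*((2*s+1).choose (s+1)) / ((s:ℚ)+2) := by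
    rw [eq_div_iff hs2]; linear_combination q3
  have d4 : ((2*s+4).choose (s+2) : ℚ) = 4*(2*(s:ℚ)+3)*((2*s+1).choose (s+1)) / ((s:ℚ)+2) := by
    rw [eq_div_iff hs2]; linear_combination q4*((s:ℚ)+2) + 2*q3
  have d1 : ((2*s+2).choose (s+1) : ℚ) = 2*((2*s+1).choose (s+1)) := by exact_mod_cast cen s
  have q5 : (((2*k+s+2).choose k):ℚ) * ((k:ℚ)+s+2)
      = (2*(k:ℚ)+s+2)*(((2*k+s+1).choose k):ℚ) := by
    have := hb1 (k+s+1) k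
    rw [show k+s+1+k+1 = 2*k+s+2 from by omega, show k+s+1+k = 2*k+s+1 from by omega,
        show k+s+1+1 = k+s+2 from by omega] at this
    exact_mod_cast this
  have d5 : ((2*k+s+2).choose k : ℚ)
      = (2*(k:ℚ)+s+2)*((2*k+s+1).choose k) / ((k:ℚ)+s+2) := by
    rw [eq_div_iff (by positivity)]; linear_combination q5
  have q6 : (((2*k+s+2).choose (k+1)):ℚ) * ((k:ℚ)+1)
      = (2*(k:ℚ)+s+2)*(((2*k+s+1).choose k):ℚ) := by
    have := hb2 (k+s+1) k
    rw [show k+s+1+k+1 = 2*k+s+2 from by omega, show k+s+1+k = 2*k+s+1 from by omega] at this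
    exact_mod_cast this
  have d6 : ((2*k+s+2).choose (k+1) : ℚ)
      = (2*(k:ℚ)+s+2)*((2*k+s+1).choose k) / ((k:ℚ)+1) := by
    rw [eq_div_iff (by positivity)]; linear_combination q6
  have q7 : (((k+1).choose (j+1)):ℚ) * ((k:ℚ)-(j:ℚ)) = ((k:ℚ)+1)*((k.choose (j+1)):ℚ) := by
    have := hz1 k j hjk
    have hc : ((k - j : ℕ) : ℚ) = (k:ℚ)-(j:ℚ) := by
      push_cast [Nat.cast_sub (by omega : j ≤ k)]; ring
    calc (((k+1).choose (j+1)):ℚ) * ((k:ℚ)-(j:ℚ))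
        = (((k+1).choose (j+1) * (k-j) : ℕ) : ℚ) := by push_cast [hc]; ring
      _ = (((k+1) * (k.choose (j+1)) : ℕ) : ℚ) := by rw [this]
      _ = ((k:ℚ)+1)*((k.choose (j+1)):ℚ) := by push_cast; ring
  have d7 : (((k+1).choose (j+1)):ℚ) = ((k:ℚ)+1)*((k.choose (j+1)):ℚ) / ((k:ℚ)-(j:ℚ)) := by
    rw [eq_div_iff (ne_of_gt hkj)]; linear_combination q7
  have q8 : ((k.choose j):ℚ) * ((k:ℚ)-(j:ℚ)) = ((k.choose (j+1)):ℚ)*((j:ℚ)+1) := by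
    have := hz2 k j hjk
    have hc : ((k - j : ℕ) : ℚ) = (k:ℚ)-(j:ℚ) := by
      push_cast [Nat.cast_sub (by omega : j ≤ k)]; ring
    calc ((k.choose j):ℚ) * ((k:ℚ)-(j:ℚ))
        = ((k.choose j * (k-j) : ℕ) : ℚ) := by push_cast [hc]; ring
      _ = (((k.choose (j+1)) * (j+1) : ℕ) : ℚ) := by rw [this]
      _ = ((k.choose (j+1)):ℚ)*((j:ℚ)+1) := by push_cast; ring
  have d8 : ((k.choose j):ℚ) = ((k.choose (j+1)):ℚ)*((j:ℚ)+1) / ((k:ℚ)-(j:ℚ)) := by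
    rw [eq_div_iff (ne_of_gt hkj)]; linear_combination q8
  rw [d4, d3, d1, d5, d6, d7, d8]
  rw [pow_succ]
  field_simp
  push_cast
  ring

lemma perA0 (s k : ℕ) :
    ((k:ℚ)+s+2) * Tq (k+s+2) k 0 + gq (k+s+1) (k+1) 0
    = 2*(4*((k:ℚ)+s+1)+3) * Tq (k+s+1) k 0 + gq (k+s+1) k 0 := by
  have hs2 : ((s:ℚ)+2) ≠ 0 := by positivity
  simp only [Tq, gq, Nat.choose_zero_right]
  rw [show 2*(k+s+2) - 2*k = 2*s+4 from by omega,
      show (k+s+2) - k = s+2 from by omega,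
      show (k+s+2)+k = 2*k+s+2 from by omega,
      show (k+s+1) - (k+1) = s from by omega,
      show (k+s+1)+(k+1) = 2*k+s+2 from by omega,
      show 2*(k+s+1) - 2*k = 2*s+2 from by omega,
      show (k+s+1) - k = s+1 from by omega,
      show (k+s+1)+k = 2*k+s+1 from by omega,
      show 2*(s+1)+1 = 2*s+3 from by omega,
      show (s+1)+1 = s+2 from rfl]
  have q3 : (((2*s+3).choose (s+2)):ℚ) * ((s:ℚ)+2)
      = 2*(2*(s:ℚ)+3)*(((2*s+1).choose (s+1)):ℚ) := by exact_mod_cast cen2 s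
  have q4 : (((2*s+4).choose (s+2)):ℚ) = 2*(((2*s+3).choose (s+2)):ℚ) := by exact_mod_cast cen3 s
  have d3 : ((2*s+3).choose (s+2) : ℚ) = 2*(2*(s:ℚ)+3)*((2*s+1).choose (s+1)) / ((s:ℚ)+2) := by
    rw [eq_div_iff hs2]; linear_combination q3
  have d4 : ((2*s+4).choose (s+2) : ℚ) = 4*(2*(s:ℚ)+3)*((2*s+1).choose (s+1)) / ((s:ℚ)+2) := by
    rw [eq_div_iff hs2]; linear_combination q4*((s:ℚ)+2) + 2*q3
  have d1 : ((2*s+2).choose (s+1) : ℚ) = 2*((2*s+1).choose (s+1)) := by exact_mod_cast cen s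
  have q5 : (((2*k+s+2).choose k):ℚ) * ((k:ℚ)+s+2)
      = (2*(k:ℚ)+s+2)*(((2*k+s+1).choose k):ℚ) := by
    have := hb1 (k+s+1) k
    rw [show k+s+1+k+1 = 2*k+s+2 from by omega, show k+s+1+k = 2*k+s+1 from by omega,
        show k+s+1+1 = k+s+2 from by omega] at this
    exact_mod_cast this
  have d5 : ((2*k+s+2).choose k : ℚ)
      = (2*(k:ℚ)+s+2)*((2*k+s+1).choose k) / ((k:ℚ)+s+2) := by
    rw [eq_div_iff (by positivity)]; linear_combination q5
  have q6 : (((2*k+s+2).choose (k+1)):ℚ) * ((k:ℚ)+1)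
      = (2*(k:ℚ)+s+2)*(((2*k+s+1).choose k):ℚ) := by
    have := hb2 (k+s+1) k
    rw [show k+s+1+k+1 = 2*k+s+2 from by omega, show k+s+1+k = 2*k+s+1 from by omega] at this
    exact_mod_cast this
  have d6 : ((2*k+s+2).choose (k+1) : ℚ)
      = (2*(k:ℚ)+s+2)*((2*k+s+1).choose k) / ((k:ℚ)+1) := by
    rw [eq_div_iff (by positivity)]; linear_combination q6
  rw [d4, d3, d1, d5, d6, pow_succ]
  field_simp
  push_cast
  ring

lemma perB (m j : ℕ) (hjm : j + 1 ≤ m) :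
    ((m:ℚ)+1) * (Tq (m+1) m (j+1) + Tq (m+1) (m+1) (j+1))
    = 2*(4*(m:ℚ)+2*((j:ℚ)+1)+3) * Tq m m (j+1) + 4*((m:ℚ)+(j:ℚ)+1) * Tq m m j
      + gq m m (j+1) := by
  have hmj : (0:ℚ) < (m:ℚ)-j := by
    have : (j:ℚ) + 1 ≤ m := by exact_mod_cast hjm
    linarith
  simp only [Tq, gq]
  rw [show 2*(m+1) - 2*m = 2 from by omega,
      show (m+1) - m = 1 from by omega,
      show (m+1)+m = 2*m+1 from by omega,
      show 2*(m+1) - 2*(m+1) = 0 from by omega,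
      show (m+1) - (m+1) = 0 from by omega,
      show (m+1)+(m+1) = 2*m+2 from by omega,
      show 2*m - 2*m = 0 from by omega,
      show m - m = 0 from by omega,
      show m+m = 2*m from by omega,
      show 2*0+1 = 1 from rfl]
  simp only [Nat.choose_self, Nat.choose_zero_right, Nat.choose_one_right]
  have rB1 : ((2*m+1).choose m : ℚ) = ((2*m+1).choose (m+1) : ℚ) := by
    have := Nat.choose_symm (n := 2*m+1) (k := m+1) (by omega)
    rw [show 2*m+1-(m+1) = m from by omega] at this
    exact_mod_cast this
  have rB2 : ((2*m+2).choose (m+1) : ℚ) = 2*((2*m+1).choose (m+1) : ℚ) := by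
    exact_mod_cast cen m
  have qB3 : ((2*m).choose m : ℚ) * (2*(m:ℚ)+1) = ((2*m+1).choose (m+1) : ℚ) * ((m:ℚ)+1) := by
    have := Nat.add_one_mul_choose_eq (2*m) m
    rw [Nat.mul_comm] at this
    exact_mod_cast this
  have dB3 : ((2*m).choose m : ℚ) = ((2*m+1).choose (m+1) : ℚ) * ((m:ℚ)+1) / (2*(m:ℚ)+1) := by
    rw [eq_div_iff (by positivity)]; linear_combination qB3
  have qB4 : (((m+1).choose (j+1)):ℚ) * ((m:ℚ)-(j:ℚ)) = ((m:ℚ)+1)*((m.choose (j+1)):ℚ) := by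
    have := hz1 m j hjm
    have hc : ((m - j : ℕ) : ℚ) = (m:ℚ)-(j:ℚ) := by
      push_cast [Nat.cast_sub (by omega : j ≤ m)]; ring
    calc (((m+1).choose (j+1)):ℚ) * ((m:ℚ)-(j:ℚ))
        = (((m+1).choose (j+1) * (m-j) : ℕ) : ℚ) := by push_cast [hc]; ring
      _ = (((m+1) * (m.choose (j+1)) : ℕ) : ℚ) := by rw [this]
      _ = ((m:ℚ)+1)*((m.choose (j+1)):ℚ) := by push_cast; ring
  have dB4 : (((m+1).choose (j+1)):ℚ) = ((m:ℚ)+1)*((m.choose (j+1)):ℚ) / ((m:ℚ)-(j:ℚ)) := by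
    rw [eq_div_iff (ne_of_gt hmj)]; linear_combination qB4
  have qB5 : ((m.choose j):ℚ) * ((m:ℚ)-(j:ℚ)) = ((m.choose (j+1)):ℚ)*((j:ℚ)+1) := by
    have := hz2 m j hjm
    have hc : ((m - j : ℕ) : ℚ) = (m:ℚ)-(j:ℚ) := by
      push_cast [Nat.cast_sub (by omega : j ≤ m)]; ring
    calc ((m.choose j):ℚ) * ((m:ℚ)-(j:ℚ))
        = ((m.choose j * (m-j) : ℕ) : ℚ) := by push_cast [hc]; ring
      _ = (((m.choose (j+1)) * (j+1) : ℕ) : ℚ) := by rw [this]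
      _ = ((m.choose (j+1)):ℚ)*((j:ℚ)+1) := by push_cast; ring
  have dB5 : ((m.choose j):ℚ) = ((m.choose (j+1)):ℚ)*((j:ℚ)+1) / ((m:ℚ)-(j:ℚ)) := by
    rw [eq_div_iff (ne_of_gt hmj)]; linear_combination qB5
  rw [rB1, rB2, dB3, dB4, dB5, pow_succ]
  field_simp
  ring

lemma perB0 (m : ℕ) :
    ((m:ℚ)+1) * (Tq (m+1) m 0 + Tq (m+1) (m+1) 0)
    = 2*(4*(m:ℚ)+3) * Tq m m 0 + gq m m 0 := by
  simp only [Tq, gq, Nat.choose_zero_right]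
  rw [show 2*(m+1) - 2*m = 2 from by omega,
      show (m+1) - m = 1 from by omega,
      show (m+1)+m = 2*m+1 from by omega,
      show 2*(m+1) - 2*(m+1) = 0 from by omega,
      show (m+1) - (m+1) = 0 from by omega,
      show (m+1)+(m+1) = 2*m+2 from by omega,
      show 2*m - 2*m = 0 from by omega,
      show m - m = 0 from by omega,
      show m+m = 2*m from by omega,
      show 2*0+1 = 1 from rfl]
  simp only [Nat.choose_self, Nat.choose_zero_right, Nat.choose_one_right]
  have rB1 : ((2*m+1).choose m : ℚ) = ((2*m+1).choose (m+1) : ℚ) := by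
    have := Nat.choose_symm (n := 2*m+1) (k := m+1) (by omega)
    rw [show 2*m+1-(m+1) = m from by omega] at this
    exact_mod_cast this
  have rB2 : ((2*m+2).choose (m+1) : ℚ) = 2*((2*m+1).choose (m+1) : ℚ) := by
    exact_mod_cast cen m
  have qB3 : ((2*m).choose m : ℚ) * (2*(m:ℚ)+1) = ((2*m+1).choose (m+1) : ℚ) * ((m:ℚ)+1) := by
    have := Nat.add_one_mul_choose_eq (2*m) m
    rw [Nat.mul_comm] at this
    exact_mod_cast this
  have dB3 : ((2*m).choose m : ℚ) = ((2*m+1).choose (m+1) : ℚ) * ((m:ℚ)+1) / (2*(m:ℚ)+1) := by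
    rw [eq_div_iff (by positivity)]; linear_combination qB3
  rw [rB1, rB2, dB3, pow_succ]
  field_simp
  ring

lemma perC (u j : ℕ) :
    gq (j+1+u) (j+1) (j+1) = 4*(((j:ℚ)+1+u)+((j:ℚ)+1)) * Tq (j+1+u) j j := by
  simp only [Tq, gq]
  rw [show (j+1+u) - (j+1) = u from by omega,
      show (j+1+u)+(j+1) = 2*j+u+2 from by omega,
      show 2*(j+1+u) - 2*j = 2*u+2 from by omega,
      show (j+1+u) - j = u+1 from by omega,
      show (j+1+u)+j = 2*j+u+1 from by omega]
  simp only [Nat.choose_self]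
  have r1 : ((2*u+2).choose (u+1) : ℚ) = 2*((2*u+1).choose (u+1) : ℚ) := by exact_mod_cast cen u
  have q2 : (((2*j+u+2).choose (j+1)):ℚ) * ((j:ℚ)+1)
      = (2*(j:ℚ)+u+2)*(((2*j+u+1).choose j):ℚ) := by
    have := hb2 (j+u+1) j
    rw [show j+u+1+j+1 = 2*j+u+2 from by omega, show j+u+1+j = 2*j+u+1 from by omega] at this
    exact_mod_cast this
  have d2 : (((2*j+u+2).choose (j+1)):ℚ)
      = (2*(j:ℚ)+u+2)*(((2*j+u+1).choose j):ℚ) / ((j:ℚ)+1) := by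
    rw [eq_div_iff (by positivity)]; linear_combination q2
  rw [r1, d2, pow_succ]
  field_simp
  push_cast
  ring

lemma tele (f : ℕ → ℚ) (b : ℕ) :
    ∀ a, a ≤ b + 1 → ∑ k ∈ Finset.Icc a b, (f k - f (k+1)) = f a - f (b+1) := by
  induction b with
  | zero =>
    intro a ha
    interval_cases a
    · simp
    · simp
  | succ b ih =>
    intro a ha
    by_cases h : a ≤ b + 1
    · rw [Finset.sum_Icc_succ_top h, ih a h]; ring
    · have ha2 : a = b + 2 := by omega
      subst ha2
      rw [Finset.Icc_eq_empty (by omega)]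
      simp

lemma key_sum (m j : ℕ) (hjm : j + 1 ≤ m) :
    ((m:ℚ)+1) * ∑ k ∈ Finset.Icc (j+1) (m+1), Tq (m+1) k (j+1)
    = 2*(4*(m:ℚ)+2*((j:ℚ)+1)+3) * ∑ k ∈ Finset.Icc (j+1) m, Tq m k (j+1)
      + 4*((m:ℚ)+(j:ℚ)+1) * ∑ k ∈ Finset.Icc j m, Tq m k j := by
  classical
  set gg : ℕ → ℚ := fun k => if k ≤ m then gq m k (j+1) else ((m:ℚ)+1) * Tq (m+1) (m+1) (j+1)
    with hgg
  have h1 : ∑ k ∈ Finset.Icc (j+1) (m+1), Tq (m+1) k (j+1)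
      = (∑ k ∈ Finset.Icc (j+1) m, Tq (m+1) k (j+1)) + Tq (m+1) (m+1) (j+1) :=
    Finset.sum_Icc_succ_top (by omega) _
  have h2 : ∑ k ∈ Finset.Icc j m, Tq m k j
      = Tq m j j + ∑ k ∈ Finset.Icc (j+1) m, Tq m k j := by
    rw [show Finset.Icc j m = insert j (Finset.Icc (j+1) m) from by
          ext x; simp only [Finset.mem_Icc, Finset.mem_insert]; omega,
        Finset.sum_insert (by simp only [Finset.mem_Icc]; omega)]
  have per : ∀ k ∈ Finset.Icc (j+1) m,
      ((m:ℚ)+1) * Tq (m+1) k (j+1)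
      = 2*(4*(m:ℚ)+2*((j:ℚ)+1)+3) * Tq m k (j+1) + 4*((m:ℚ)+(j:ℚ)+1) * Tq m k j
        + (gg k - gg (k+1)) := by
    intro k hk
    simp only [Finset.mem_Icc] at hk
    by_cases hkm : k < m
    · obtain ⟨s, rfl⟩ : ∃ s, m = k + s + 1 := ⟨m - k - 1, by omega⟩
      have e1 : gg k = gq (k+s+1) k (j+1) := if_pos (by omega)
      have e2 : gg (k+1) = gq (k+s+1) (k+1) (j+1) := if_pos (by omega)
      rw [e1, e2, show k+s+1+1 = k+s+2 from by omega]
      have hA := perA s k j (by omega)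
      push_cast
      linear_combination hA
    · have hk2 : k = m := by omega
      subst hk2
      have e1 : gg k = gq k k (j+1) := if_pos le_rfl
      have e2 : gg (k+1) = ((k:ℚ)+1) * Tq (k+1) (k+1) (j+1) := if_neg (by omega)
      rw [e1, e2]
      linear_combination perB k j (by omega)
  have hsum := Finset.sum_congr rfl per
  rw [Finset.sum_add_distrib, Finset.sum_add_distrib, tele gg m (j+1) (by omega),
      ← Finset.mul_sum, ← Finset.mul_sum, ← Finset.mul_sum] at hsum
  have hgg1 : gg (j+1) = 4*((m:ℚ)+(j:ℚ)+1) * Tq m j j := by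
    obtain ⟨u, rfl⟩ : ∃ u, m = j + 1 + u := ⟨m - j - 1, by omega⟩
    have : gg (j+1) = gq (j+1+u) (j+1) (j+1) := if_pos (by omega)
    rw [this]
    have := perC u j
    push_cast
    linear_combination this
  have hgg2 : gg (m+1) = ((m:ℚ)+1) * Tq (m+1) (m+1) (j+1) := if_neg (by omega)
  rw [h1, h2]
  linear_combination hsum + hgg1 - hgg2

lemma key_sum0 (m : ℕ) :
    ((m:ℚ)+1) * ∑ k ∈ Finset.Icc 0 (m+1), Tq (m+1) k 0
    = 2*(4*(m:ℚ)+3) * ∑ k ∈ Finset.Icc 0 m, Tq m k 0 := by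
  classical
  set gg : ℕ → ℚ := fun k => if k ≤ m then gq m k 0 else ((m:ℚ)+1) * Tq (m+1) (m+1) 0 with hgg
  have h1 : ∑ k ∈ Finset.Icc 0 (m+1), Tq (m+1) k 0
      = (∑ k ∈ Finset.Icc 0 m, Tq (m+1) k 0) + Tq (m+1) (m+1) 0 :=
    Finset.sum_Icc_succ_top (by omega) _
  have per : ∀ k ∈ Finset.Icc 0 m,
      ((m:ℚ)+1) * Tq (m+1) k 0 = 2*(4*(m:ℚ)+3) * Tq m k 0 + (gg k - gg (k+1)) := by
    intro k hk
    simp only [Finset.mem_Icc] at hk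
    by_cases hkm : k < m
    · obtain ⟨s, rfl⟩ : ∃ s, m = k + s + 1 := ⟨m - k - 1, by omega⟩
      have e1 : gg k = gq (k+s+1) k 0 := if_pos (by omega)
      have e2 : gg (k+1) = gq (k+s+1) (k+1) 0 := if_pos (by omega)
      rw [e1, e2, show k+s+1+1 = k+s+2 from by omega]
      have hA := perA0 s k
      push_cast
      linear_combination hA
    · have hk2 : k = m := by omega
      subst hk2
      have e1 : gg k = gq k k 0 := if_pos le_rfl
      have e2 : gg (k+1) = ((k:ℚ)+1) * Tq (k+1) (k+1) 0 := if_neg (by omega)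
      rw [e1, e2]
      linear_combination perB0 k
  have hsum := Finset.sum_congr rfl per
  rw [Finset.sum_add_distrib, tele gg m 0 (by omega),
      ← Finset.mul_sum, ← Finset.mul_sum] at hsum
  have hgg1 : gg 0 = 0 := by
    have : gg 0 = gq m 0 0 := if_pos (by omega)
    rw [this]; simp [gq]
  have hgg2 : gg (m+1) = ((m:ℚ)+1) * Tq (m+1) (m+1) 0 := if_neg (by omega)
  rw [h1]
  linear_combination hsum + hgg1 - hgg2

lemma bmd_cast (i m : ℕ) :
    bmd (i:ℤ) m = (2:ℚ) ^ (-(2 * (m:ℤ))) * ∑ k ∈ Finset.Icc i m, Tq m k i := by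
  unfold bmd
  rw [if_pos (Int.natCast_nonneg i), Int.toNat_natCast]
  rfl

lemma bmd_gt {j : ℤ} (m : ℕ) (h : (m:ℤ) < j) : bmd j m = 0 := by
  unfold bmd
  split
  · rw [Finset.Icc_eq_empty (by omega)]
    simp
  · rfl

lemma bmd_neg1 (m : ℕ) : bmd (-1) m = 0 := by
  unfold bmd
  rw [if_neg (by omega)]

lemma bmd_nonneg (j : ℤ) (m : ℕ) : 0 ≤ bmd j m := by
  unfold bmd
  split
  · apply mul_nonneg (by positivity)
    apply Finset.sum_nonneg
    intro k _
    positivity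
  · exact le_rfl

lemma bmd_pos (i m : ℕ) (h : i ≤ m) : 0 < bmd (i:ℤ) m := by
  rw [bmd_cast]
  apply mul_pos (by positivity)
  apply Finset.sum_pos'
  · intro k _
    unfold Tq
    positivity
  · refine ⟨m, by simp [Finset.mem_Icc, h], ?_⟩
    unfold Tq
    rw [show 2*m-2*m = 0 from by omega, show m-m = 0 from by omega]
    have c1 : 0 < ((m+m).choose m : ℚ) := by exact_mod_cast Nat.choose_pos (by omega)
    have c2 : 0 < (m.choose i : ℚ) := by exact_mod_cast Nat.choose_pos h
    have c0 : ((0:ℕ).choose 0 : ℚ) = 1 := by norm_num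
    rw [c0]
    positivity

lemma topid (m : ℕ) : ((m:ℚ)+1) * Tq (m+1) (m+1) (m+1) = 4*(2*(m:ℚ)+1) * Tq m m m := by
  unfold Tq
  rw [show 2*(m+1)-2*(m+1) = 0 from by omega, show (m+1)-(m+1) = 0 from by omega,
      show (m+1)+(m+1) = 2*m+2 from by omega, show 2*m-2*m = 0 from by omega,
      show m-m = 0 from by omega, show m+m = 2*m from by omega]
  simp only [Nat.choose_self, Nat.choose_zero_right]
  have r1 : ((2*m+2).choose (m+1) : ℚ) = 2*((2*m+1).choose (m+1) : ℚ) := by exact_mod_cast cen m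
  have q2 : ((2*m+1).choose (m+1) : ℚ) * ((m:ℚ)+1) = ((2*m).choose m : ℚ) * (2*(m:ℚ)+1) := by
    have := Nat.add_one_mul_choose_eq (2*m) m
    rw [Nat.mul_comm] at this
    exact_mod_cast this.symm
  rw [r1, pow_succ]
  push_cast
  linear_combination (4*(2:ℚ)^m) * q2

lemma bmd_rec (m i : ℕ) :
    2*((m:ℚ)+1) * bmd (i:ℤ) (m+1)
    = (4*(m:ℚ)+2*(i:ℚ)+3) * bmd (i:ℤ) m + 2*((m:ℚ)+(i:ℚ)) * bmd ((i:ℤ)-1) m := by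
  have hE : (2:ℚ) ^ (-(2 * ((m+1:ℕ):ℤ))) = (2:ℚ) ^ (-(2 * (m:ℤ))) / 4 := by
    have h1 : (-(2 * ((m+1:ℕ):ℤ))) = (-(2 * (m:ℤ))) + (-2) := by push_cast; ring
    rw [h1, zpow_add₀ (by norm_num : (2:ℚ) ≠ 0)]
    norm_num
    ring
  rcases Nat.lt_or_ge i (m+1) with him | him
  · -- i ≤ m
    rcases Nat.eq_zero_or_pos i with rfl | hi
    · have h0 : ((0:ℕ):ℤ) - 1 = -1 := by norm_num
      rw [h0, bmd_neg1, bmd_cast, bmd_cast, hE]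
      have := key_sum0 m
      push_cast
      linear_combination ((2:ℚ) ^ (-(2 * (m:ℤ))) / 2) * this
    · obtain ⟨j, rfl⟩ : ∃ j, i = j + 1 := ⟨i - 1, by omega⟩
      have h0 : ((j+1:ℕ):ℤ) - 1 = (j:ℤ) := by push_cast; ring
      rw [h0, bmd_cast, bmd_cast, bmd_cast, hE]
      have := key_sum m j (by omega)
      push_cast
      linear_combination ((2:ℚ) ^ (-(2 * (m:ℤ))) / 2) * this
  · rcases Nat.eq_or_lt_of_le him with rfl | him2
    · have hz1 : bmd ((m+1:ℕ):ℤ) m = 0 := bmd_gt m (by push_cast; omega)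
      have h0 : ((m+1:ℕ):ℤ) - 1 = (m:ℤ) := by push_cast; ring
      rw [hz1, h0, bmd_cast (m+1) (m+1), bmd_cast m m, Finset.Icc_self, Finset.Icc_self,
          Finset.sum_singleton, Finset.sum_singleton, hE]
      have := topid m
      push_cast
      linear_combination ((2:ℚ) ^ (-(2 * (m:ℤ))) / 2) * this
    · rw [bmd_gt (m+1) (by push_cast; omega), bmd_gt m (by push_cast; omega),
          bmd_gt m (by push_cast; omega)]
      ring

lemma inv (m : ℕ) :
    (∀ i : ℕ, i ≤ m → 0 < bmd (i:ℤ) m) ∧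
    (∀ i : ℕ, 1 ≤ i →
      (i:ℚ) * bmd (i:ℤ) m ≤ ((m:ℚ)+1-(i:ℚ)) * bmd ((i:ℤ)-1) m ∧
      2*((m:ℚ)+1-(i:ℚ)) * bmd ((i:ℤ)-1) m ≤ (2*(i:ℚ)+1) * bmd (i:ℤ) m) := by
  induction m with
  | zero =>
    constructor
    · intro i hi
      interval_cases i
      exact bmd_pos 0 0 le_rfl
    · intro i hi
      have hz : bmd (i:ℤ) 0 = 0 := bmd_gt 0 (by exact_mod_cast hi)
      rcases Nat.eq_or_lt_of_le hi with rfl | hi2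
      · have h0 : ((1:ℕ):ℤ) - 1 = 0 := by norm_num
        rw [hz, h0]
        norm_num
      · have hz2 : bmd ((i:ℤ)-1) 0 = 0 := bmd_gt 0 (by omega)
        rw [hz, hz2]
        norm_num
  | succ m ih =>
    obtain ⟨hpos, hbnd⟩ := ih
    have hm1 : (0:ℚ) < (m:ℚ) + 1 := by positivity
    constructor
    · intro i hi
      have hrec := bmd_rec m i
      rcases Nat.lt_or_ge i (m+1) with him | him
      · have h1 := hpos i (by omega)
        have h2 := bmd_nonneg ((i:ℤ)-1) m
        nlinarith [hrec, mul_pos (show (0:ℚ) < 4*(m:ℚ)+2*(i:ℚ)+3 by positivity) h1,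
          mul_nonneg (show (0:ℚ) ≤ 2*((m:ℚ)+(i:ℚ)) by positivity) h2]
      · have hieq : i = m + 1 := by omega
        subst hieq
        have hz : bmd ((m+1:ℕ):ℤ) m = 0 := bmd_gt m (by push_cast; omega)
        have h0 : ((m+1:ℕ):ℤ) - 1 = (m:ℤ) := by push_cast; ring
        rw [hz, h0] at hrec
        have h1 := bmd_pos m m le_rfl
        nlinarith [hrec, mul_pos (show (0:ℚ) < 2*((m:ℚ)+((m+1:ℕ):ℚ)) by push_cast; positivity) h1]
    · intro i hi
      obtain ⟨j, rfl⟩ : ∃ j, i = j + 1 := ⟨i - 1, by omega⟩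
      have rec1 := bmd_rec m (j+1)
      have rec0 := bmd_rec m j
      have hc1 : ((j+1:ℕ):ℤ) = (j:ℤ) + 1 := by push_cast; ring
      have hc2 : ((j+1:ℕ):ℤ) - 1 = (j:ℤ) := by push_cast; ring
      rw [hc2] at rec1
      -- slack inequalities at level m
      obtain ⟨H1, H2⟩ := hbnd (j+1) (by omega)
      rw [hc2] at H1 H2
      have H3 : (j:ℚ) * bmd (j:ℤ) m ≤ ((m:ℚ)+1-(j:ℚ)) * bmd ((j:ℤ)-1) m := by
        rcases Nat.eq_zero_or_pos j with rfl | hj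
        · have : ((0:ℕ):ℤ) - 1 = -1 := by norm_num
          rw [this, bmd_neg1]
          simp
        · exact (hbnd j hj).1
      have H4 : 2*((m:ℚ)+1-(j:ℚ)) * bmd ((j:ℤ)-1) m ≤ (2*(j:ℚ)+1) * bmd (j:ℤ) m := by
        rcases Nat.eq_zero_or_pos j with rfl | hj
        · have : ((0:ℕ):ℤ) - 1 = -1 := by norm_num
          rw [this, bmd_neg1]
          simpa using bmd_nonneg 0 m
        · exact (hbnd j hj).2
      set x := bmd ((j:ℤ)-1) m
      set y := bmd (j:ℤ) m
      set z := bmd ((j+1:ℕ):ℤ) m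
      set B0 := bmd (j:ℤ) (m+1)
      set B1 := bmd ((j+1:ℕ):ℤ) (m+1)
      have key2 : 2*((m:ℚ)+1) * ((2*(j:ℚ)+3) * B1 - 2*((m:ℚ)+1-(j:ℚ)) * B0)
          = 2*((m:ℚ)+(j:ℚ)) * ((2*(j:ℚ)+1)*y - 2*((m:ℚ)+1-(j:ℚ))*x)
            + (4*(m:ℚ)+2*(j:ℚ)+5) * ((2*(j:ℚ)+3)*z - 2*((m:ℚ)-(j:ℚ))*y) := by
        push_cast at rec1 rec0 ⊢
        linear_combination (2*(j:ℚ)+3) * rec1 - 2*((m:ℚ)+1-(j:ℚ)) * rec0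
      have key1 : 2*((m:ℚ)+1) * (((m:ℚ)+1-(j:ℚ)) * B0 - ((j:ℚ)+1) * B1)
          = 2*((m:ℚ)+(j:ℚ)) * (((m:ℚ)+1-(j:ℚ))*x - (j:ℚ)*y)
            + (4*(m:ℚ)+2*(j:ℚ)+5) * (((m:ℚ)-(j:ℚ))*y - ((j:ℚ)+1)*z) + y := by
        push_cast at rec1 rec0 ⊢
        linear_combination ((m:ℚ)+1-(j:ℚ)) * rec0 - ((j:ℚ)+1) * rec1
      have s2 : 0 ≤ (2*(j:ℚ)+1)*y - 2*((m:ℚ)+1-(j:ℚ))*x := by linarith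
      have s4 : 0 ≤ (2*(j:ℚ)+3)*z - 2*((m:ℚ)-(j:ℚ))*y := by push_cast at H2 ⊢; linarith
      have s1 : 0 ≤ ((m:ℚ)+1-(j:ℚ))*x - (j:ℚ)*y := by linarith
      have s3 : 0 ≤ ((m:ℚ)-(j:ℚ))*y - ((j:ℚ)+1)*z := by push_cast at H1 ⊢; linarith
      have hy : 0 ≤ y := bmd_nonneg _ m
      have cpos : (0:ℚ) ≤ 2*((m:ℚ)+(j:ℚ)) := by positivity
      have cpos2 : (0:ℚ) < 4*(m:ℚ)+2*(j:ℚ)+5 := by positivity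
      have hB0 : bmd (((j+1:ℕ):ℤ)-1) (m+1) = B0 := by rw [hc2]
      have hm2 : (0:ℚ) < 2*((m:ℚ)+1) := by positivity
      have g1 : 0 ≤ ((m:ℚ)+1-(j:ℚ)) * B0 - ((j:ℚ)+1) * B1 := by
        have hR : 0 ≤ 2*((m:ℚ)+1) * (((m:ℚ)+1-(j:ℚ)) * B0 - ((j:ℚ)+1) * B1) := by
          rw [key1]
          have t1 := mul_nonneg cpos s1
          have t2 := mul_nonneg cpos2.le s3
          linarith
        exact (mul_nonneg_iff_of_pos_left hm2).mp hR
      have g2 : 0 ≤ (2*(j:ℚ)+3) * B1 - 2*((m:ℚ)+1-(j:ℚ)) * B0 := by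
        have hR : 0 ≤ 2*((m:ℚ)+1) * ((2*(j:ℚ)+3) * B1 - 2*((m:ℚ)+1-(j:ℚ)) * B0) := by
          rw [key2]
          have t1 := mul_nonneg cpos s2
          have t2 := mul_nonneg cpos2.le s4
          linarith
        exact (mul_nonneg_iff_of_pos_left hm2).mp hR
      constructor
      · rw [hB0]
        push_cast
        linarith
      · rw [hB0]
        push_cast
        linarith
end BM

theorem bmd_logconcave (m : ℕ) (hm : 2 ≤ m) (i : ℕ) (hi1 : 1 ≤ i) (hi2 : i ≤ m - 1) :
    bmd i m ^ 2 > bmd ((i : ℤ) - 1) m * bmd (i + 1) m := by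
  obtain ⟨hpos, hbnd⟩ := BM.inv m
  have him : i + 1 ≤ m := by omega
  have hb := hpos i (by omega)
  have ha := BM.bmd_nonneg ((i:ℤ)-1) m
  have hc := BM.bmd_nonneg ((i:ℤ)+1) m
  have H2 := (hbnd i hi1).2
  have H1 := (hbnd (i+1) (by omega)).1
  push_cast at H1 H2
  rw [show (i:ℤ)+1-1 = (i:ℤ) from by ring] at H1
  set a := bmd ((i:ℤ)-1) m
  set b := bmd (i:ℤ) m
  set c := bmd ((i:ℤ)+1) m
  have hmi : (i:ℚ) + 1 ≤ (m:ℚ) := by exact_mod_cast him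
  -- H2 : 2*(m+1-i)*a ≤ (2i+1)*b ; H1 : (i+1)*c ≤ (m-i)*b
  have p1 : (2*((m:ℚ)+1-(i:ℚ))*a) * (((i:ℚ)+1)*c) ≤ ((2*(i:ℚ)+1)*b) * (((m:ℚ)+1-((i:ℚ)+1))*b) := by
    apply mul_le_mul H2 H1 (by positivity) (by nlinarith)
  nlinarith [p1, mul_pos hb hb, mul_nonneg ha hc]
end

section
/- The Boros-Moll sequence is unimodal with peak at the middle: d_i(m) < d_{i+1}(m) for 0 ≤ i < ⌊m/2⌋ and d_i(m) > d_{i+1}(m) for ⌊m/2⌋ ≤ i < m. -/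
open Finset

/-- auxiliary coefficient -/
def bmc (m k : ℕ) : ℕ := 2^k * Nat.choose (2*m - 2*k) (m-k) * Nat.choose (m+k) k

lemma bmc_pos (m k : ℕ) (h : k ≤ m) : 0 < bmc m k := by
  unfold bmc
  have h1 : 0 < Nat.choose (2*m-2*k) (m-k) := Nat.choose_pos (by omega)
  have h2 : 0 < Nat.choose (m+k) k := Nat.choose_pos (by omega)
  positivity

lemma bmc_lt (m k : ℕ) (h : k < m) : bmc m k < bmc m (k+1) := by
  obtain ⟨n, rfl⟩ : ∃ n, m = k + n + 1 := ⟨m - k - 1, by omega⟩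
  have e1 : 2*(k+n+1) - 2*k = 2*n+2 := by omega
  have e2 : (k+n+1) - k = n+1 := by omega
  have e3 : 2*(k+n+1) - 2*(k+1) = 2*n := by omega
  have e4 : (k+n+1) - (k+1) = n := by omega
  have e5 : (k+n+1) + k = 2*k+n+1 := by omega
  have e6 : (k+n+1) + (k+1) = 2*k+n+2 := by omega
  unfold bmc
  rw [e1, e2, e3, e4, e5, e6]
  set A := Nat.choose (2*n) n with hA'
  set B := Nat.choose (2*k+n+1) k with hB'
  set A' := Nat.choose (2*n+2) (n+1) with hA''
  set B' := Nat.choose (2*k+n+2) (k+1) with hB''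
  have hA : (n+1) * A' = 2*(2*n+1)*A := by
    have p2 : Nat.choose (2*n+1) n = Nat.choose (2*n+1) (n+1) :=
      (Nat.choose_symm_half n).symm
    have p3 : (2*n+1) * A = Nat.choose (2*n+1) (n+1) * (n+1) := by
      rw [hA']
      exact Nat.add_one_mul_choose_eq (2*n) n
    have p1 : A' = Nat.choose (2*n+1) n + Nat.choose (2*n+1) (n+1) := by
      rw [hA'', show 2*n+2 = (2*n+1)+1 from by omega]
      exact Nat.choose_succ_succ (2*n+1) n
    rw [p1, p2]
    nlinarith [p3]
  have hB : (2*k+n+2) * B = B' * (k+1) := Nat.add_one_mul_choose_eq (2*k+n+1) k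
  have hApos : 0 < A := Nat.choose_pos (by omega)
  have hBpos : 0 < B := Nat.choose_pos (by omega)
  have key : (n+1) * ((k+1) * (2^k * A' * B)) < (n+1) * ((k+1) * (2^(k+1) * A * B')) := by
    have l1 : (n+1) * ((k+1) * (2^k * A' * B)) = 2*(2*n+1)*(k+1) * (2^k * A * B) := by
      calc (n+1) * ((k+1) * (2^k * A' * B)) = ((n+1)*A') * ((k+1) * (2^k * B)) := by ring
        _ = (2*(2*n+1)*A) * ((k+1) * (2^k * B)) := by rw [hA]
        _ = 2*(2*n+1)*(k+1) * (2^k * A * B) := by ring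
    have l2 : (n+1) * ((k+1) * (2^(k+1) * A * B')) = 2*(n+1)*(2*k+n+2) * (2^k * A * B) := by
      calc (n+1) * ((k+1) * (2^(k+1) * A * B')) = (B'*(k+1)) * ((n+1) * (2 * 2^k * A)) := by ring
        _ = ((2*k+n+2)*B) * ((n+1) * (2 * 2^k * A)) := by rw [hB]
        _ = 2*(n+1)*(2*k+n+2) * (2^k * A * B) := by ring
    rw [l1, l2]
    have coeff : 2*(2*n+1)*(k+1) < 2*(n+1)*(2*k+n+2) := by nlinarith
    have pos : 0 < 2^k * A * B := by positivity
    exact Nat.mul_lt_mul_of_lt_of_le coeff (le_refl _) pos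
  exact Nat.lt_of_mul_lt_mul_left (Nat.lt_of_mul_lt_mul_left key)

lemma bmc_mono (m : ℕ) : ∀ {k j : ℕ}, k ≤ j → j ≤ m → bmc m k ≤ bmc m j := by
  intro k j hkj hjm
  induction j with
  | zero => simp [Nat.le_zero.mp hkj]
  | succ j ih =>
    rcases Nat.eq_or_lt_of_le hkj with h | h
    · rw [h]
    · exact le_trans (ih (by omega) (by omega)) (le_of_lt (bmc_lt m j (by omega)))

lemma choose_down (i k : ℕ) (h : k ≤ 2*i+1) : Nat.choose k (i+1) ≤ Nat.choose k i := by
  have h1 : Nat.choose k (i+1) * (i+1) = Nat.choose k i * (k - i) := Nat.choose_succ_right_eq k i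
  have h2 : Nat.choose k i * (k - i) ≤ Nat.choose k i * (i+1) :=
    Nat.mul_le_mul_left _ (by omega)
  have h3 : Nat.choose k (i+1) * (i+1) ≤ Nat.choose k i * (i+1) := by omega
  exact Nat.le_of_mul_le_mul_right h3 (by omega)

lemma choose_up (i k : ℕ) (h : 2*i+1 ≤ k) : Nat.choose k i ≤ Nat.choose k (i+1) := by
  have h1 : Nat.choose k (i+1) * (i+1) = Nat.choose k i * (k - i) := Nat.choose_succ_right_eq k i
  have h2 : Nat.choose k i * (i+1) ≤ Nat.choose k i * (k - i) :=
    Nat.mul_le_mul_left _ (by omega)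
  have h3 : Nat.choose k i * (i+1) ≤ Nat.choose k (i+1) * (i+1) := by omega
  exact Nat.le_of_mul_le_mul_right h3 (by omega)

lemma choose_up_strict (i k : ℕ) (h : 2*i+2 ≤ k) : Nat.choose k i < Nat.choose k (i+1) := by
  have h1 : Nat.choose k (i+1) * (i+1) = Nat.choose k i * (k - i) := Nat.choose_succ_right_eq k i
  have hp : 0 < Nat.choose k i := Nat.choose_pos (by omega)
  have h2 : Nat.choose k i * (i+1) < Nat.choose k i * (k - i) :=
    mul_lt_mul_of_pos_left (by omega) hp
  have h3 : Nat.choose k i * (i+1) < Nat.choose k (i+1) * (i+1) := by omega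
  exact Nat.lt_of_mul_lt_mul_right h3

lemma hockey (n r : ℕ) : ∑ k ∈ range (n+1), Nat.choose k r = Nat.choose (n+1) (r+1) := by
  rw [← Nat.sum_Icc_choose]
  symm
  apply Finset.sum_subset
  · intro x hx
    simp only [mem_Icc] at hx
    simp only [mem_range]; omega
  · intro x hx hx'
    simp only [mem_range] at hx
    simp only [mem_Icc] at hx'
    exact Nat.choose_eq_zero_of_lt (by omega)


lemma bmd_eq (m i : ℕ) :
    bmd (i : ℤ) m = (2 : ℚ) ^ (-(2 * (m : ℤ))) *
      ∑ k ∈ Finset.range (m+1), (bmc m k : ℚ) * (Nat.choose k i) := by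
  unfold bmd
  rw [if_pos (Int.natCast_nonneg i)]
  congr 1
  rw [Int.toNat_natCast]
  calc ∑ k ∈ Finset.Icc i m,
        (2 : ℚ) ^ k * (Nat.choose (2 * m - 2 * k) (m - k)) *
          (Nat.choose (m + k) k) * (Nat.choose k i)
      = ∑ k ∈ Finset.range (m+1),
        (2 : ℚ) ^ k * (Nat.choose (2 * m - 2 * k) (m - k)) *
          (Nat.choose (m + k) k) * (Nat.choose k i) := by
        apply Finset.sum_subset
        · intro x hx
          simp only [mem_Icc] at hx
          simp only [mem_range]; omega
        · intro x hx hx'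
          simp only [mem_range] at hx
          simp only [mem_Icc] at hx'
          have hz : Nat.choose x i = 0 := Nat.choose_eq_zero_of_lt (by omega)
          rw [hz]
          push_cast; ring
    _ = ∑ k ∈ Finset.range (m+1), (bmc m k : ℚ) * (Nat.choose k i) := by
        apply Finset.sum_congr rfl
        intro x hx
        unfold bmc
        push_cast
        ring

theorem bmd_unimodal (m : ℕ) (i : ℕ) :
    (i < m / 2 → bmd i m < bmd (i + 1) m) ∧
      (m / 2 ≤ i → i < m → bmd i m > bmd (i + 1) m) := by
  have hpow : (0:ℚ) < (2 : ℚ) ^ (-(2 * (m : ℤ))) := by positivity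
  have hcast : ((i : ℤ) + 1) = ((i + 1 : ℕ) : ℤ) := by push_cast; ring
  constructor
  · intro h
    have hm : 2*i+2 ≤ m := by omega
    rw [hcast, bmd_eq, bmd_eq]
    apply mul_lt_mul_of_pos_left _ hpow
    rw [← sub_pos]
    have expand : (∑ k ∈ range (m+1), (bmc m k : ℚ) * (Nat.choose k (i+1)))
        - (∑ k ∈ range (m+1), (bmc m k : ℚ) * (Nat.choose k i))
        = ∑ k ∈ range (m+1), (bmc m k : ℚ) * ((Nat.choose k (i+1) : ℚ) - Nat.choose k i) := by
      rw [← Finset.sum_sub_distrib]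
      apply Finset.sum_congr rfl
      intro k _
      ring
    rw [expand]
    have key1 : ∑ k ∈ range (m+1),
          (bmc m (2*i+1) : ℚ) * ((Nat.choose k (i+1) : ℚ) - Nat.choose k i)
        < ∑ k ∈ range (m+1),
          (bmc m k : ℚ) * ((Nat.choose k (i+1) : ℚ) - Nat.choose k i) := by
      apply Finset.sum_lt_sum
      · intro k hk
        simp only [mem_range] at hk
        rcases le_or_gt k (2*i+1) with hle | hgt
        · have hd : ((Nat.choose k (i+1) : ℚ) - Nat.choose k i) ≤ 0 := by
            have h1 := choose_down i k hle
            have h2 := (Nat.cast_le (α := ℚ)).2 h1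
            linarith
          have hc : (bmc m k : ℚ) ≤ bmc m (2*i+1) := by
            exact_mod_cast bmc_mono m hle (by omega)
          exact mul_le_mul_of_nonpos_right hc hd
        · have hd : (0:ℚ) ≤ ((Nat.choose k (i+1) : ℚ) - Nat.choose k i) := by
            have h1 := choose_up i k (by omega)
            have h2 := (Nat.cast_le (α := ℚ)).2 h1
            linarith
          have hc : (bmc m (2*i+1) : ℚ) ≤ bmc m k := by
            exact_mod_cast bmc_mono m (by omega) (by omega)
          exact mul_le_mul_of_nonneg_right hc hd
      · refine ⟨2*i+2, by simp only [mem_range]; omega, ?_⟩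
        have hd : (0:ℚ) < ((Nat.choose (2*i+2) (i+1) : ℚ) - Nat.choose (2*i+2) i) := by
          have h1 := choose_up_strict i (2*i+2) (le_refl _)
          have h2 := (Nat.cast_lt (α := ℚ)).2 h1
          linarith
        have hc : (bmc m (2*i+1) : ℚ) < bmc m (2*i+2) := by
          exact_mod_cast bmc_lt m (2*i+1) (by omega)
        exact mul_lt_mul_of_pos_right hc hd
    have key2 : (0:ℚ) ≤ ∑ k ∈ range (m+1),
        (bmc m (2*i+1) : ℚ) * ((Nat.choose k (i+1) : ℚ) - Nat.choose k i) := by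
      rw [← Finset.mul_sum, Finset.sum_sub_distrib]
      have h1 : ∑ k ∈ range (m+1), ((Nat.choose k (i+1) : ℚ))
          = (Nat.choose (m+1) (i+2) : ℚ) := by
        rw [← Nat.cast_sum]
        exact_mod_cast hockey m (i+1)
      have h2 : ∑ k ∈ range (m+1), ((Nat.choose k i : ℚ))
          = (Nat.choose (m+1) (i+1) : ℚ) := by
        rw [← Nat.cast_sum]
        exact_mod_cast hockey m i
      rw [h1, h2]
      have h3 : Nat.choose (m+1) (i+1) ≤ Nat.choose (m+1) (i+2) := by
        have := choose_up (i+1) (m+1) (by omega)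
        simpa using this
      have h4 := (Nat.cast_le (α := ℚ)).2 h3
      apply mul_nonneg (Nat.cast_nonneg _)
      linarith
    exact lt_of_le_of_lt key2 key1
  · intro h1 h2
    have hm : m ≤ 2*i+1 := by omega
    rw [gt_iff_lt, hcast, bmd_eq, bmd_eq]
    apply mul_lt_mul_of_pos_left _ hpow
    apply Finset.sum_lt_sum
    · intro k hk
      simp only [mem_range] at hk
      have hle := choose_down i k (by omega)
      have hc := (Nat.cast_le (α := ℚ)).2 hle
      exact mul_le_mul_of_nonneg_left hc (Nat.cast_nonneg _)
    · refine ⟨i, by simp only [mem_range]; omega, ?_⟩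
      have hch : (Nat.choose i (i+1) : ℚ) < Nat.choose i i := by
        rw [Nat.choose_self, Nat.choose_eq_zero_of_lt (Nat.lt_succ_self i)]
        norm_num
      have hcpos : (0:ℚ) < bmc m i := by
        exact_mod_cast bmc_pos m i (by omega)
      exact mul_lt_mul_of_pos_left hch hcpos
end

section
/- The unsigned Stirling numbers of the first kind are interlacing log-concave: for all n ≥ 1 and 1 ≤ k < n, c(n,k)·c(n+1,k+1) ≥ c(n+1,k)·c(n,k+1) and c(n,k+1)·c(n+1,k+1) ≥ c(n,k)·c(n+1,k+2). -/
/-- Unsigned Stirling numbers of the first kind: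
`stirling1 n k` is the coefficient of `x^k` in `x (x+1) ⋯ (x+n-1)`,
satisfying `c(n,k) = (n-1) c(n-1,k) + c(n-1,k-1)`. -/
def stirling1 : ℕ → ℕ → ℕ
  | 0, 0 => 1
  | 0, _ + 1 => 0
  | n + 1, 0 => n * stirling1 n 0
  | n + 1, k + 1 => n * stirling1 n (k + 1) + stirling1 n k

lemma stirling1_eq_zero (n : ℕ) : ∀ k, n < k → stirling1 n k = 0 := by
  induction n with
  | zero =>
    intro k hk
    cases k with
    | zero => omega
    | succ j => rfl
  | succ m ih =>
    intro k hk
    cases k with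
    | zero => omega
    | succ j =>
      show m * stirling1 m (j+1) + stirling1 m j = 0
      rw [ih (j+1) (by omega), ih j (by omega)]
      ring

lemma stirling1_pos (n : ℕ) : ∀ k, 1 ≤ k → k ≤ n → 0 < stirling1 n k := by
  induction n with
  | zero => intro k h1 h2; omega
  | succ m ih =>
    intro k h1 h2
    cases k with
    | zero => omega
    | succ j =>
      show 0 < m * stirling1 m (j+1) + stirling1 m j
      cases j with
      | zero =>
        cases m with
        | zero => simp [stirling1]
        | succ p =>
          have h := ih 1 le_rfl (by omega)
          have h2 : 0 < (p+1) * stirling1 (p+1) (0+1) := Nat.mul_pos (by omega) h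
          omega
      | succ i =>
        have h := ih (i+1) (by omega) (by omega)
        omega

lemma stirling1_logconcave (n : ℕ) : ∀ k,
    stirling1 n k * stirling1 n (k+2) ≤ stirling1 n (k+1) * stirling1 n (k+1) := by
  induction n with
  | zero =>
    intro k
    rw [stirling1_eq_zero 0 (k+2) (by omega)]
    simp
  | succ m ih =>
    intro k
    cases k with
    | zero =>
      show m * stirling1 m 0 * (m * stirling1 m 2 + stirling1 m 1)
          ≤ (m * stirling1 m 1 + stirling1 m 0) * (m * stirling1 m 1 + stirling1 m 0)
      have h1 := ih 0
      nlinarith [Nat.mul_le_mul_left (m*m) h1,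
        Nat.zero_le (m * (stirling1 m 1 * stirling1 m 0)),
        Nat.zero_le (stirling1 m 0 * stirling1 m 0)]
    | succ j =>
      show (m * stirling1 m (j+1) + stirling1 m j) * (m * stirling1 m (j+3) + stirling1 m (j+2))
          ≤ (m * stirling1 m (j+2) + stirling1 m (j+1)) * (m * stirling1 m (j+2) + stirling1 m (j+1))
      set a := stirling1 m (j+2) with ha
      set b := stirling1 m (j+1) with hb
      set d := stirling1 m j with hd
      set e := stirling1 m (j+3) with he
      have h1 : b * e ≤ a * a := ih (j+1)
      have h2 : d * a ≤ b * b := ih j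
      have h3 : d * e ≤ a * b := by
        rcases Nat.eq_zero_or_pos (a * b) with h | h
        · rcases Nat.mul_eq_zero.mp h with hz | hz
          · have hm : m < j + 2 := by
              by_contra hc
              have := stirling1_pos m (j+2) (by omega) (by omega)
              omega
            rw [he, stirling1_eq_zero m (j+3) (by omega)]
            simp
          · have hm : m < j + 1 := by
              by_contra hc
              have := stirling1_pos m (j+1) (by omega) (by omega)
              omega
            rw [he, stirling1_eq_zero m (j+3) (by omega)]
            simp
        · have hp := Nat.mul_le_mul h1 h2
          have key : (d * e) * (a * b) ≤ (a * b) * (a * b) := by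
            calc (d * e) * (a * b) = (b * e) * (d * a) := by ring
              _ ≤ (a * a) * (b * b) := hp
              _ = (a * b) * (a * b) := by ring
          exact Nat.le_of_mul_le_mul_right key h
      nlinarith [Nat.mul_le_mul_left (m * m) h1, Nat.mul_le_mul_left m h3,
        Nat.zero_le (m * (a * b))]

theorem stirling1_interlacing_logconcave (n : ℕ) (hn : 1 ≤ n) (k : ℕ)
    (hk1 : 1 ≤ k) (hk2 : k < n) :
    stirling1 n k * stirling1 (n + 1) (k + 1) ≥
        stirling1 (n + 1) k * stirling1 n (k + 1) ∧
      stirling1 n (k + 1) * stirling1 (n + 1) (k + 1) ≥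
        stirling1 n k * stirling1 (n + 1) (k + 2) := by
  obtain ⟨j, rfl⟩ : ∃ j, k = j + 1 := ⟨k - 1, by omega⟩
  constructor
  · show stirling1 n (j+1) * (n * stirling1 n (j+2) + stirling1 n (j+1))
        ≥ (n * stirling1 n (j+1) + stirling1 n j) * stirling1 n (j+2)
    have h := stirling1_logconcave n j
    nlinarith
  · show stirling1 n (j+2) * (n * stirling1 n (j+2) + stirling1 n (j+1))
        ≥ stirling1 n (j+1) * (n * stirling1 n (j+3) + stirling1 n (j+2))
    have h := stirling1_logconcave n (j+1)
    nlinarith [Nat.mul_le_mul_left n h]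
end
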